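/- Let φ : (0, μ(R)) → (0, ∞) be admissible with least quasiconcave majorant ψ. Then for every measurable function f, sup_{t∈(0,μ(R))} φ(t) f**(t) = sup_{t∈(0,μ(R))} ψ(t) f**(t), i.e., ‖f‖_{M_φ} = ‖f‖_{M_ψ}. -/

import Mathlib

open MeasureTheory Set
open scoped ENNReal

/-- The nonincreasing rearrangement `f*(t) = inf {λ > 0 : μ{|f| > λ} ≤ t}`. -/
noncomputable def rearr {α : Type*} [MeasurableSpace α] (μ : Measure α) (f : α → ℝ) (t : ℝ) :
    ℝ≥0∞ :=
  sInf {l : ℝ≥0∞ | μ {x | l < ENNReal.ofReal |f x|} ≤ ENNReal.ofReal t}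

/-- The maximal nonincreasing rearrangement `f**(t) = (1/t) ∫₀ᵗ f*(s) ds`. -/
noncomputable def maxRearr {α : Type*} [MeasurableSpace α] (μ : Measure α) (f : α → ℝ) (t : ℝ) :
    ℝ≥0∞ :=
  (∫⁻ s in Set.Ioo (0 : ℝ) t, rearr μ f s) / ENNReal.ofReal t

/-- The least quasiconcave majorant
`ψ(t) = t · sup_{s ∈ [t, L)} (sup_{τ ∈ (0, s]} φ(τ)) / s`. -/
noncomputable def lqm (L : ℝ≥0∞) (φ : ℝ → ℝ) (t : ℝ) : ℝ≥0∞ :=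
  ENNReal.ofReal t *
    ⨆ (s : ℝ) (_ : t ≤ s) (_ : ENNReal.ofReal s < L),
      (⨆ (τ : ℝ) (_ : 0 < τ) (_ : τ ≤ s), ENNReal.ofReal (φ τ)) / ENNReal.ofReal s

/-! Since `φ ≤ ψ` pointwise, only `ψ(t) f**(t) ≤ ‖f‖_{M_φ}` needs an argument. The function
`t f**(t) = ∫₀ᵗ f*` is nondecreasing, while `f**` is nonincreasing as the running average of the
nonincreasing `f*`. Hence for `τ ≤ s` and `t ≤ s`,
`φ(τ) · t f**(t) / s ≤ φ(τ) f**(s) ≤ φ(τ) f**(τ)`, and taking suprema over `τ` and `s` gives the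
bound. -/

lemma ofReal_le_lqm {L : ℝ≥0∞} {φ : ℝ → ℝ} {t : ℝ} (ht : 0 < t)
    (htL : ENNReal.ofReal t < L) : ENNReal.ofReal (φ t) ≤ lqm L φ t := by
  have hsup : ENNReal.ofReal (φ t) ≤ ⨆ (τ : ℝ) (_ : 0 < τ) (_ : τ ≤ t), ENNReal.ofReal (φ τ) :=
    le_iSup₂_of_le t ht <| le_iSup_of_le le_rfl le_rfl
  calc ENNReal.ofReal (φ t) = ENNReal.ofReal t * (ENNReal.ofReal (φ t) / ENNReal.ofReal t) :=
        (ENNReal.mul_div_cancel (by simpa using ht) ENNReal.ofReal_ne_top).symm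
    _ ≤ lqm L φ t := by
        rw [lqm]
        gcongr
        exact le_iSup₂_of_le t le_rfl <| le_iSup_of_le htL <| ENNReal.div_le_div_right hsup _

section Rearrangement

variable {α : Type*} [MeasurableSpace α] (μ : Measure α) (f : α → ℝ)

lemma rearr_antitone : Antitone (rearr μ f) := fun _ _ hab =>
  sInf_le_sInf fun _ hl => hl.trans (ENNReal.ofReal_le_ofReal hab)

lemma Antitone.ofReal_mul_setLIntegral_Ioo_le {g : ℝ → ℝ≥0∞} (hg : Antitone g) {τ s : ℝ}
    (hτ : 0 < τ) (hτs : τ ≤ s) :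
    ENNReal.ofReal τ * ∫⁻ x in Ioo 0 s, g x ≤ ENNReal.ofReal s * ∫⁻ x in Ioo 0 τ, g x := by
  set A := ∫⁻ x in Ioo 0 τ, g x
  have hsplit : ∫⁻ x in Ioo 0 s, g x = A + ∫⁻ x in Ico τ s, g x := by
    rw [← Ioo_union_Ico_eq_Ioo hτ hτs, lintegral_union measurableSet_Ico
      (Ico_disjoint_Ico_same.mono_left Ioo_subset_Ico_self)]
  have htail : ∫⁻ x in Ico τ s, g x ≤ ENNReal.ofReal (s - τ) * g τ := by
    calc ∫⁻ x in Ico τ s, g x ≤ ∫⁻ _ in Ico τ s, g τ :=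
          setLIntegral_mono' measurableSet_Ico fun x hx => hg hx.1
      _ = ENNReal.ofReal (s - τ) * g τ := by rw [setLIntegral_const, Real.volume_Ico, mul_comm]
  have hhead : ENNReal.ofReal τ * g τ ≤ A := by
    calc ENNReal.ofReal τ * g τ = ∫⁻ _ in Ioo 0 τ, g τ := by
          rw [setLIntegral_const, Real.volume_Ioo, sub_zero, mul_comm]
      _ ≤ A := setLIntegral_mono' measurableSet_Ioo fun x hx => hg hx.2.le
  calc ENNReal.ofReal τ * ∫⁻ x in Ioo 0 s, g x
      ≤ ENNReal.ofReal τ * A + ENNReal.ofReal (s - τ) * (ENNReal.ofReal τ * g τ) := by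
        rw [hsplit, mul_add, mul_left_comm]
        gcongr
    _ ≤ ENNReal.ofReal τ * A + ENNReal.ofReal (s - τ) * A := by gcongr
    _ = ENNReal.ofReal s * A := by
        rw [← add_mul, ← ENNReal.ofReal_add hτ.le (sub_nonneg.2 hτs), add_sub_cancel]

lemma ofReal_mul_maxRearr {t : ℝ} (ht : 0 < t) :
    ENNReal.ofReal t * maxRearr μ f t = ∫⁻ x in Ioo 0 t, rearr μ f x := by
  rw [maxRearr, ENNReal.mul_div_cancel (by simp [ht]) ENNReal.ofReal_ne_top]

lemma maxRearr_antitoneOn : AntitoneOn (maxRearr μ f) (Ioi 0) := by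
  intro τ hτ s _ hτs
  have hτ0 : ENNReal.ofReal τ ≠ 0 := by simpa using hτ
  rw [maxRearr, maxRearr, ENNReal.le_div_iff_mul_le (.inl hτ0) (.inl ENNReal.ofReal_ne_top),
    mul_comm, ← mul_div_assoc]
  refine ENNReal.div_le_of_le_mul ?_
  rw [mul_comm _ (ENNReal.ofReal s)]
  exact (rearr_antitone μ f).ofReal_mul_setLIntegral_Ioo_le hτ hτs

lemma ofReal_mul_maxRearr_le {t s : ℝ} (ht : 0 < t) (hts : t ≤ s) :
    ENNReal.ofReal t * maxRearr μ f t ≤ ENNReal.ofReal s * maxRearr μ f s := by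
  rw [ofReal_mul_maxRearr μ f ht, ofReal_mul_maxRearr μ f (ht.trans_le hts)]
  exact lintegral_mono_set (Ioo_subset_Ioo_right hts)

lemma iSup_ofReal_mul_maxRearr_le {L : ℝ≥0∞} {φ : ℝ → ℝ} {s : ℝ}
    (hsL : ENNReal.ofReal s < L) :
    (⨆ (τ : ℝ) (_ : 0 < τ) (_ : τ ≤ s), ENNReal.ofReal (φ τ)) * maxRearr μ f s ≤
      ⨆ (t : ℝ) (_ : 0 < t) (_ : ENNReal.ofReal t < L),
        ENNReal.ofReal (φ t) * maxRearr μ f t := by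
  simp only [ENNReal.iSup_mul]
  refine iSup_le fun τ => iSup₂_le fun hτ hτs => ?_
  refine le_iSup₂_of_le τ hτ <| le_iSup_of_le ((ENNReal.ofReal_le_ofReal hτs).trans_lt hsL) ?_
  gcongr
  exact maxRearr_antitoneOn μ f hτ (hτ.trans_le hτs) hτs

lemma lqm_mul_maxRearr_le {L : ℝ≥0∞} {φ : ℝ → ℝ} {t : ℝ} (ht : 0 < t) :
    lqm L φ t * maxRearr μ f t ≤
      ⨆ (τ : ℝ) (_ : 0 < τ) (_ : ENNReal.ofReal τ < L),
        ENNReal.ofReal (φ τ) * maxRearr μ f τ := by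
  rw [lqm, mul_comm (ENNReal.ofReal t), mul_assoc]
  simp only [ENNReal.iSup_mul]
  refine iSup_le fun s => iSup₂_le fun hts hsL => ?_
  refine le_trans ?_ (iSup_ofReal_mul_maxRearr_le μ f hsL)
  rw [ENNReal.mul_comm_div]
  gcongr
  refine ENNReal.div_le_of_le_mul ?_
  rw [mul_comm (maxRearr μ f s)]
  exact ofReal_mul_maxRearr_le μ f ht hts

end Rearrangement

theorem MNorm_lqm_eq_general {α : Type*} [MeasurableSpace α] (μ : Measure α) (φ : ℝ → ℝ)
    (f : α → ℝ) :
    (⨆ (t : ℝ) (_ : 0 < t) (_ : ENNReal.ofReal t < μ Set.univ),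
        ENNReal.ofReal (φ t) * maxRearr μ f t) =
      ⨆ (t : ℝ) (_ : 0 < t) (_ : ENNReal.ofReal t < μ Set.univ),
        lqm (μ Set.univ) φ t * maxRearr μ f t := by
  refine le_antisymm (iSup_le fun t => iSup₂_le fun ht htL => ?_)
    (iSup_le fun t => iSup₂_le fun ht _ => lqm_mul_maxRearr_le μ f ht)
  exact le_iSup₂_of_le t ht <| le_iSup_of_le htL <| by gcongr; exact ofReal_le_lqm ht htL

/-- For admissible `φ` with least quasiconcave majorant `ψ`, `‖f‖_{M_φ} = ‖f‖_{M_ψ}`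
for every measurable function `f`. -/
theorem MNorm_lqm_eq {α : Type*} [MeasurableSpace α] (μ : Measure α) [SigmaFinite μ]
    [NullSingletonClass μ] (hμ : 0 < μ Set.univ)
    (φ : ℝ → ℝ)
    (hpos : ∀ t : ℝ, 0 < t → ENNReal.ofReal t < μ Set.univ → 0 < φ t)
    (hadm : ∀ t : ℝ, 0 < t → ENNReal.ofReal t < μ Set.univ → lqm (μ Set.univ) φ t < ⊤)
    (f : α → ℝ) (hf : Measurable f) :
    (⨆ (t : ℝ) (_ : 0 < t) (_ : ENNReal.ofReal t < μ Set.univ),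
        ENNReal.ofReal (φ t) * maxRearr μ f t) =
      ⨆ (t : ℝ) (_ : 0 < t) (_ : ENNReal.ofReal t < μ Set.univ),
        lqm (μ Set.univ) φ t * maxRearr μ f t :=
  MNorm_lqm_eq_general μ φ f
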